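/- arXiv:1309.6982 — 5 statements merged into one kernel-verified Lean document; each statement's English description precedes it below -/
import Mathlib

section
/- Let κ > 0, R > 0 and h ∈ C¹([0,R]), and set M := sup_{0≤s≤R}|h'(s)|. Define h̄(r) = (1/r)∫₀ʳ h(s) ds (with h̄(0) = h(0)) and f(r) = exp((κ/2)∫₀ʳ (h(s) − h̄(s))²/s ds). Then for every 0 ≤ r ≤ R, 1 ≤ f(r) ≤ exp(κ M² r² / 16). -/
noncomputable section

open Real Set

/-- Radial average `h̄(r) = (1/r)∫₀ʳ h(s) ds`, with `h̄(0) = h(0)`. -/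
def radAvg1 (h : ℝ → ℝ) (r : ℝ) : ℝ :=
  if r = 0 then h 0 else (1 / r) * ∫ s in (0:ℝ)..r, h s

/-- Metric coefficient `f(r) = exp((κ/2)∫₀ʳ (h−h̄)²/s ds)`. -/
def metricF1 (κ : ℝ) (h : ℝ → ℝ) (r : ℝ) : ℝ :=
  Real.exp ((κ / 2) * ∫ s in (0:ℝ)..r, (h s - radAvg1 h s) ^ 2 / s)

/-!
Writing `h s - h̄ s = (1/s) ∫₀ˢ (h s - h t) dt` and using `|h s - h t| ≤ M (s - t)` (mean value
theorem) gives `|h - h̄|(s) ≤ M s / 2`. Hence the integrand `(h - h̄)² / s` of the exponent lies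
between `0` and `M² s / 4`, and the exponent between `0` and `κ M² r² / 16`.
-/

open MeasureTheory

theorem sub_radAvg1_eq_integral {h : ℝ → ℝ} {s : ℝ} (hs : s ≠ 0)
    (hint : IntervalIntegrable h volume 0 s) :
    h s - radAvg1 h s = s⁻¹ * ∫ t in (0:ℝ)..s, (h s - h t) := by
  rw [radAvg1, if_neg hs, intervalIntegral.integral_sub intervalIntegrable_const hint,
    intervalIntegral.integral_const, smul_eq_mul]
  field_simp
  ring

theorem abs_sub_radAvg1_le {h : ℝ → ℝ} {M s : ℝ} (hs : 0 < s)
    (hint : IntervalIntegrable h volume 0 s)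
    (hlip : ∀ t ∈ Icc 0 s, |h s - h t| ≤ M * (s - t)) :
    |h s - radAvg1 h s| ≤ M * s / 2 := by
  have hmean : ‖∫ t in (0:ℝ)..s, (h s - h t)‖ ≤ ∫ t in (0:ℝ)..s, M * (s - t) :=
    intervalIntegral.norm_integral_le_of_norm_le hs.le
      (Filter.Eventually.of_forall fun t ht => hlip t (Ioc_subset_Icc_self ht))
      ((by fun_prop : Continuous fun t => M * (s - t)).intervalIntegrable 0 s)
  have hval : ∫ t in (0:ℝ)..s, M * (s - t) = M * s ^ 2 / 2 := by
    rw [intervalIntegral.integral_const_mul,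
      intervalIntegral.integral_comp_sub_left (fun t => t), integral_id]
    ring
  rw [Real.norm_eq_abs, hval] at hmean
  rw [sub_radAvg1_eq_integral hs.ne' hint, abs_mul, abs_inv, abs_of_pos hs]
  calc s⁻¹ * |∫ t in (0:ℝ)..s, (h s - h t)| ≤ s⁻¹ * (M * s ^ 2 / 2) := by gcongr
    _ = M * s / 2 := by field_simp

theorem abs_sub_radAvg1_le_of_hasDerivWithinAt {h h' : ℝ → ℝ} {M R : ℝ}
    (hd : ∀ r ∈ Icc 0 R, HasDerivWithinAt h (h' r) (Icc 0 R) r)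
    (hM : ∀ r ∈ Icc 0 R, |h' r| ≤ M) :
    ∀ s ∈ Ioc 0 R, |h s - radAvg1 h s| ≤ M * s / 2 := by
  intro s hs
  have hsub : Icc 0 s ⊆ Icc 0 R := Icc_subset_Icc le_rfl hs.2
  have hcont : ContinuousOn h (Icc 0 s) := fun x hx => (hd x (hsub hx)).continuousWithinAt.mono hsub
  refine abs_sub_radAvg1_le hs.1 (hcont.intervalIntegrable_of_Icc hs.1.le) fun t ht => ?_
  have hlip := (convex_Icc 0 R).norm_image_sub_le_of_norm_hasDerivWithin_le hd hM (hsub ht)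
    (hsub (right_mem_Icc.2 hs.1.le))
  rwa [Real.norm_eq_abs, Real.norm_eq_abs, abs_of_nonneg (sub_nonneg.2 ht.2)] at hlip

theorem integral_sq_sub_radAvg1_div_nonneg (h : ℝ → ℝ) {r : ℝ} (hr : 0 ≤ r) :
    0 ≤ ∫ s in (0:ℝ)..r, (h s - radAvg1 h s) ^ 2 / s :=
  intervalIntegral.integral_nonneg hr fun _ hs => div_nonneg (sq_nonneg _) hs.1

theorem integral_sq_sub_radAvg1_div_le {h : ℝ → ℝ} {M r : ℝ} (hr : 0 ≤ r)
    (hbound : ∀ s ∈ Ioc 0 r, |h s - radAvg1 h s| ≤ M * s / 2) :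
    ∫ s in (0:ℝ)..r, (h s - radAvg1 h s) ^ 2 / s ≤ M ^ 2 * r ^ 2 / 8 := by
  have hpointwise : ∀ s ∈ Ioc 0 r, ‖(h s - radAvg1 h s) ^ 2 / s‖ ≤ M ^ 2 / 4 * s := by
    intro s hs
    obtain ⟨hlower, hupper⟩ := abs_le.1 (hbound s hs)
    have hsq : (h s - radAvg1 h s) ^ 2 ≤ (M * s / 2) ^ 2 := sq_le_sq' hlower hupper
    rw [Real.norm_of_nonneg (div_nonneg (sq_nonneg _) hs.1.le), div_le_iff₀ hs.1]
    linarith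
  -- No integrability of the integrand is needed: a pointwise norm bound controls its integral.
  calc ∫ s in (0:ℝ)..r, (h s - radAvg1 h s) ^ 2 / s
      ≤ ‖∫ s in (0:ℝ)..r, (h s - radAvg1 h s) ^ 2 / s‖ := Real.le_norm_self _
    _ ≤ ∫ s in (0:ℝ)..r, M ^ 2 / 4 * s :=
      intervalIntegral.norm_integral_le_of_norm_le hr (Filter.Eventually.of_forall hpointwise)
        ((continuous_const.mul continuous_id).intervalIntegrable 0 r)
    _ = M ^ 2 * r ^ 2 / 8 := by
      rw [intervalIntegral.integral_const_mul, integral_id]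
      ring

theorem one_le_metricF1 {κ : ℝ} (hκ : 0 ≤ κ) (h : ℝ → ℝ) {r : ℝ} (hr : 0 ≤ r) :
    1 ≤ metricF1 κ h r :=
  Real.one_le_exp (mul_nonneg (by positivity) (integral_sq_sub_radAvg1_div_nonneg h hr))

theorem metricF1_le {κ M r : ℝ} {h : ℝ → ℝ} (hκ : 0 ≤ κ) (hr : 0 ≤ r)
    (hbound : ∀ s ∈ Ioc 0 r, |h s - radAvg1 h s| ≤ M * s / 2) :
    metricF1 κ h r ≤ Real.exp (κ * M ^ 2 * r ^ 2 / 16) := by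
  rw [metricF1, Real.exp_le_exp]
  calc κ / 2 * ∫ s in (0:ℝ)..r, (h s - radAvg1 h s) ^ 2 / s
      ≤ κ / 2 * (M ^ 2 * r ^ 2 / 8) := by
        gcongr
        exact integral_sq_sub_radAvg1_div_le hr hbound
    _ = κ * M ^ 2 * r ^ 2 / 16 := by ring

theorem metricF_basic_estimate_general
    (κ R : ℝ) (hκ : 0 < κ) (h h' : ℝ → ℝ)
    (hd : ∀ r ∈ Icc (0:ℝ) R, HasDerivWithinAt h (h' r) (Icc 0 R) r)
    (hc : ContinuousOn h' (Icc 0 R)) :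
    ∀ r ∈ Icc (0:ℝ) R,
      1 ≤ metricF1 κ h r ∧
      metricF1 κ h r
        ≤ Real.exp (κ * (sSup ((fun s => |h' s|) '' Icc 0 R)) ^ 2 * r ^ 2 / 16) := by
  intro r hr
  have hM : ∀ t ∈ Icc 0 R, |h' t| ≤ sSup ((fun s => |h' s|) '' Icc 0 R) := fun t ht =>
    le_csSup (isCompact_Icc.image_of_continuousOn hc.abs).bddAbove (mem_image_of_mem _ ht)
  have hbound := abs_sub_radAvg1_le_of_hasDerivWithinAt hd hM
  exact ⟨one_le_metricF1 hκ.le h hr.1,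
    metricF1_le hκ.le hr.1 fun s hs => hbound s ⟨hs.1, hs.2.trans hr.2⟩⟩

/-- For `h ∈ C¹([0,R])` with `M = sup|h'|`:
`1 ≤ f(r) ≤ exp(κM²r²/16)` for all `0 ≤ r ≤ R`. -/
theorem metricF_basic_estimate
    (κ R : ℝ) (hκ : 0 < κ) (hR : 0 < R) (h h' : ℝ → ℝ)
    (hd : ∀ r ∈ Icc (0:ℝ) R, HasDerivWithinAt h (h' r) (Icc 0 R) r)
    (hc : ContinuousOn h' (Icc 0 R)) :
    ∀ r ∈ Icc (0:ℝ) R,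
      1 ≤ metricF1 κ h r ∧
      metricF1 κ h r
        ≤ Real.exp (κ * (sSup ((fun s => |h' s|) '' Icc 0 R)) ^ 2 * r ^ 2 / 16) :=
  metricF_basic_estimate_general κ R hκ h h' hd hc
end
end

section
/- Let Λ > 0, K ≥ 1, u₁ > 0, and set r_c⁻ := √(3/(ΛK)). Let r : [0,u₁] → ℝ be differentiable with r'(u) ≤ −(1/2)(1 − (ΛK/3) r(u)²) for all u ∈ [0,u₁]. If r(u₁) ≥ r_c⁻, then r(u) ≥ r_c⁻ for every u ∈ [0,u₁]. -/
/-!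
Below `r_c⁻` the bracket `1 - (ΛK/3) r²` is positive as long as `r ≥ 0`, so every level
`c ∈ [0, r_c⁻)` is a strict barrier: where `r = c` we have `r' < 0`, and going backwards in `u`
the graph cannot cross the level from above. Hence `r ≥ c` on `[0, u₁]` for all such `c`, and
`r ≥ r_c⁻` in the limit. The level `r_c⁻` itself is only a non-strict barrier (`r ≡ r_c⁻` solves
the equality case), which is why the approximation is needed.
-/

noncomputable section

open Real Set

/-- Reflecting time turns this into the forward barrier theorem
`image_le_of_deriv_right_lt_deriv_boundary'` for `s ↦ -f (-s)` below the constant `-c`. -/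
theorem le_image_of_hasDerivWithinAt_neg_of_eq {f f' : ℝ → ℝ} {a b c : ℝ}
    (hf : ∀ x ∈ Icc a b, HasDerivWithinAt f (f' x) (Icc a b) x) (hb : c ≤ f b)
    (hneg : ∀ x ∈ Ioc a b, f x = c → f' x < 0) : ∀ x ∈ Icc a b, c ≤ f x := by
  have hcont : ContinuousOn (fun s => -f (-s)) (Icc (-b) (-a)) :=
    (ContinuousOn.comp (fun x hx => (hf x hx).continuousWithinAt) continuousOn_neg
      fun s hs => ⟨le_neg_of_le_neg hs.2, neg_le_of_neg_le hs.1⟩).neg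
  have hderiv : ∀ s ∈ Ico (-b) (-a),
      HasDerivWithinAt (fun s => -f (-s)) (f' (-s)) (Ici s) s := by
    intro s hs
    have hmem : -s ∈ Ioc a b := ⟨lt_neg_of_lt_neg hs.2, neg_le_of_neg_le hs.1⟩
    have hleft : HasDerivWithinAt f (f' (-s)) (Iic (-s)) (-s) :=
      (hf _ (Ioc_subset_Icc_self hmem)).mono_of_mem_nhdsWithin (Icc_mem_nhdsLE_of_mem hmem)
    exact (hleft.comp s (hasDerivAt_neg s).hasDerivWithinAt
      fun y hy => neg_le_neg (mem_Ici.1 hy)).neg.congr_deriv (by ring)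
  intro x hx
  simpa using image_le_of_deriv_right_lt_deriv_boundary' hcont hderiv (B := fun _ => -c)
    (B' := 0) (by simpa using hb) continuousOn_const (fun _ _ => hasDerivWithinAt_const _ _ _)
    (fun s hs hfs => hneg (-s) ⟨lt_neg_of_lt_neg hs.2, neg_le_of_neg_le hs.1⟩ (by simpa using hfs))
    (x := -x) ⟨neg_le_neg hx.2, neg_le_neg hx.1⟩

theorem le_image_of_hasDerivWithinAt_neg_of_mem_Ico {f f' : ℝ → ℝ} {a b m c : ℝ} (hmc : m < c)
    (hf : ∀ x ∈ Icc a b, HasDerivWithinAt f (f' x) (Icc a b) x) (hb : c ≤ f b)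
    (hneg : ∀ x ∈ Ioc a b, f x ∈ Ico m c → f' x < 0) : ∀ x ∈ Icc a b, c ≤ f x := by
  intro x hx
  refine le_of_forall_lt_imp_le_of_dense fun d hd => ?_
  have hlevel : max d m < c := max_lt hd hmc
  calc d ≤ max d m := le_max_left d m
    _ ≤ f x := le_image_of_hasDerivWithinAt_neg_of_eq hf (hlevel.le.trans hb)
        (fun y hy hfy => hneg y hy ⟨hfy ▸ le_max_right d m, hfy ▸ hlevel⟩) x hx

theorem mul_sq_lt_one_of_lt_sqrt_inv {μ x : ℝ} (hμ : 0 < μ) (hx0 : 0 ≤ x) (hx : x < √μ⁻¹) :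
    μ * x ^ 2 < 1 := by
  calc μ * x ^ 2 < μ * μ⁻¹ := mul_lt_mul_of_pos_left ((lt_sqrt hx0).1 hx) hμ
    _ = 1 := mul_inv_cancel₀ hμ.ne'

theorem characteristics_stay_outside_inner_horizon_general
    (Λ K u₁ : ℝ) (hΛ : 0 < Λ) (hK : 1 ≤ K)
    (r r' : ℝ → ℝ)
    (hd : ∀ u ∈ Icc (0:ℝ) u₁, HasDerivWithinAt r (r' u) (Icc 0 u₁) u)
    (hhigh : ∀ u ∈ Icc (0:ℝ) u₁, r' u ≤ -(1 / 2) * (1 - Λ * K / 3 * r u ^ 2))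
    (hr₁ : Real.sqrt (3 / (Λ * K)) ≤ r u₁) :
    ∀ u ∈ Icc (0:ℝ) u₁, Real.sqrt (3 / (Λ * K)) ≤ r u := by
  have hμ : 0 < Λ * K / 3 := by
    have : 0 < K := zero_lt_one.trans_le hK
    positivity
  have hrc : Real.sqrt (3 / (Λ * K)) = √(Λ * K / 3)⁻¹ := by rw [inv_div]
  refine le_image_of_hasDerivWithinAt_neg_of_mem_Ico (m := 0)
    (by rw [hrc]; exact sqrt_pos.2 (inv_pos.2 hμ)) hd hr₁ fun x hx hrx => ?_
  have hbracket := mul_sq_lt_one_of_lt_sqrt_inv hμ hrx.1 (hrc ▸ hrx.2)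
  linarith [hhigh x (Ioc_subset_Icc_self hx)]

/-- Invariance of the region `r ≥ r_c⁻ = √(3/(ΛK))`:
if `r' ≤ −(1/2)(1 − (ΛK/3)r²)` on `[0,u₁]` and `r(u₁) ≥ r_c⁻`, then
`r(u) ≥ r_c⁻` for every `u ∈ [0,u₁]`. -/
theorem characteristics_stay_outside_inner_horizon
    (Λ K u₁ : ℝ) (hΛ : 0 < Λ) (hK : 1 ≤ K) (hu : 0 < u₁)
    (r r' : ℝ → ℝ)
    (hd : ∀ u ∈ Icc (0:ℝ) u₁, HasDerivWithinAt r (r' u) (Icc 0 u₁) u)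
    (hhigh : ∀ u ∈ Icc (0:ℝ) u₁, r' u ≤ -(1 / 2) * (1 - Λ * K / 3 * r u ^ 2))
    (hr₁ : Real.sqrt (3 / (Λ * K)) ≤ r u₁) :
    ∀ u ∈ Icc (0:ℝ) u₁, Real.sqrt (3 / (Λ * K)) ≤ r u :=
  characteristics_stay_outside_inner_horizon_general Λ K u₁ hΛ hK r r' hd hhigh hr₁
end
end

section
/- Let Λ > 0, K ≥ 1, and set r_c⁻ := √(3/(ΛK)). Let u₁ < T and let r : [u₁,T] → ℝ be differentiable with r'(u) ≤ −(1/2)(1 − (ΛK/3) r(u)²) for all u, and suppose 0 ≤ r(u₁) =: r₁ < r_c⁻. If r(u) ≥ 0 for all u ∈ [u₁,T], then T − u₁ ≤ 2r₁ / (1 − (ΛK/3) r₁²); in particular, any such characteristic starting in the local region r₁ < r_c⁻ reaches the center r = 0 in finite Bondi time. -/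
/-!
Since `r` starts at `r₁ ≥ 0` with `(ΛK/3) r₁² < 1`, it can never climb back above `r₁`: at the
level `r₁` the inequality forces `r' < 0`. Hence `0 ≤ r ≤ r₁` throughout, and the inequality
gives the uniform decay `r' ≤ -(1 - (ΛK/3) r₁²)/2`. As `r` stays nonnegative, this rate can only
be sustained for a time `2 r₁ / (1 - (ΛK/3) r₁²)`.
-/

open Real Set

theorem HasDerivWithinAt.Ici_of_Icc {f : ℝ → ℝ} {f' a b x : ℝ}
    (h : HasDerivWithinAt f f' (Icc a b) x) (hx : x ∈ Ico a b) :
    HasDerivWithinAt f f' (Ici x) x :=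
  h.mono_of_mem_nhdsWithin <|
    Filter.mem_of_superset (Icc_mem_nhdsGE hx.2) (Icc_subset_Icc_left hx.1)

section Riccati

variable {r r' : ℝ → ℝ} {a b c : ℝ}
  (hd : ∀ u ∈ Icc a b, HasDerivWithinAt r (r' u) (Icc a b) u)
  (hr' : ∀ u ∈ Icc a b, r' u ≤ -(1 / 2) * (1 - c * r u ^ 2))
include hd hr'

theorem riccati_le_left (hsub : c * r a ^ 2 < 1) : ∀ u ∈ Icc a b, r u ≤ r a :=
  image_le_of_deriv_right_lt_deriv_boundary
    (fun u hu => (hd u hu).continuousWithinAt)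
    (fun u hu => (hd u (Ico_subset_Icc_self hu)).Ici_of_Icc hu)
    le_rfl (fun _ => hasDerivAt_const _ _)
    (fun u hu hru => by
      have := hr' u (Ico_subset_Icc_self hu)
      rw [hru] at this
      linarith)

theorem riccati_le_left_sub_mul (hc : 0 ≤ c) (hsub : c * r a ^ 2 < 1)
    (hnn : ∀ u ∈ Icc a b, 0 ≤ r u) :
    ∀ u ∈ Icc a b, r u ≤ r a - (1 - c * r a ^ 2) / 2 * (u - a) := by
  have hle := riccati_le_left hd hr' hsub
  refine image_le_of_deriv_right_le_deriv_boundary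
    (fun u hu => (hd u hu).continuousWithinAt)
    (fun u hu => (hd u (Ico_subset_Icc_self hu)).Ici_of_Icc hu)
    (by simp) (by fun_prop)
    (fun u _ => (((hasDerivAt_id u).sub_const a).const_mul _).const_sub _ |>.hasDerivWithinAt)
    (fun u hu => ?_)
  have hu := Ico_subset_Icc_self hu
  have hsq : r u ^ 2 ≤ r a ^ 2 := pow_le_pow_left₀ (hnn u hu) (hle u hu) 2
  have := hr' u hu
  nlinarith [mul_le_mul_of_nonneg_left hsq hc]

theorem riccati_sub_le (hab : a ≤ b) (hc : 0 ≤ c) (hsub : c * r a ^ 2 < 1)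
    (hnn : ∀ u ∈ Icc a b, 0 ≤ r u) :
    b - a ≤ 2 * r a / (1 - c * r a ^ 2) := by
  have hb := riccati_le_left_sub_mul hd hr' hc hsub hnn b (right_mem_Icc.2 hab)
  have := hnn b (right_mem_Icc.2 hab)
  rw [le_div_iff₀ (by linarith)]
  linarith

end Riccati

theorem characteristics_local_region_reach_center_general
    (Λ K u₁ T : ℝ) (huT : u₁ < T)
    (r r' : ℝ → ℝ)
    (hd : ∀ u ∈ Icc u₁ T, HasDerivWithinAt r (r' u) (Icc u₁ T) u)
    (hhigh : ∀ u ∈ Icc u₁ T, r' u ≤ -(1 / 2) * (1 - Λ * K / 3 * r u ^ 2))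
    (hr₁0 : 0 ≤ r u₁) (hr₁ : r u₁ < Real.sqrt (3 / (Λ * K)))
    (hnn : ∀ u ∈ Icc u₁ T, 0 ≤ r u) :
    T - u₁ ≤ 2 * r u₁ / (1 - Λ * K / 3 * r u₁ ^ 2) := by
  have hsq : r u₁ ^ 2 < 3 / (Λ * K) := (lt_sqrt hr₁0).1 hr₁
  have hΛK : 0 < Λ * K :=
    (div_pos_iff_of_pos_left three_pos).1 (lt_of_le_of_lt (sq_nonneg _) hsq)
  have hsub : Λ * K / 3 * r u₁ ^ 2 < 1 := by
    rw [lt_div_iff₀ hΛK] at hsq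
    linarith
  exact riccati_sub_le hd hhigh huT.le (by positivity) hsub hnn

/-- Characteristics starting in the local region reach the center in
finite Bondi time: if `r' ≤ −(1/2)(1 − (ΛK/3)r²)` on `[u₁,T]`, `0 ≤ r(u₁) = r₁ < √(3/(ΛK))`,
and `r ≥ 0` on `[u₁,T]`, then `T − u₁ ≤ 2r₁/(1 − (ΛK/3)r₁²)`. -/
theorem characteristics_local_region_reach_center
    (Λ K u₁ T : ℝ) (hΛ : 0 < Λ) (hK : 1 ≤ K) (huT : u₁ < T)
    (r r' : ℝ → ℝ)
    (hd : ∀ u ∈ Icc u₁ T, HasDerivWithinAt r (r' u) (Icc u₁ T) u)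
    (hhigh : ∀ u ∈ Icc u₁ T, r' u ≤ -(1 / 2) * (1 - Λ * K / 3 * r u ^ 2))
    (hr₁0 : 0 ≤ r u₁) (hr₁ : r u₁ < Real.sqrt (3 / (Λ * K)))
    (hnn : ∀ u ∈ Icc u₁ T, 0 ≤ r u) :
    T - u₁ ≤ 2 * r u₁ / (1 - Λ * K / 3 * r u₁ ^ 2) :=
  characteristics_local_region_reach_center_general Λ K u₁ T huT r r' hd hhigh hr₁0 hr₁ hnn
end

section
/- Let α > 0, C₁ > 0, u₁ ≥ 0 and c ≥ u₁. Let r : [0,u₁] → ℝ be continuous with r(u) ≥ (1/(2α))·tanh(α(c − u)) for all u ∈ [0,u₁]. Then ∫₀^{u₁} exp(−2C₁ ∫_u^{u₁} r(s) ds) du ≤ 2^{C₁/α²}·(α/C₁); in particular the left-hand side is bounded by a constant depending only on α and C₁, independent of u₁ and c. -/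
/-!
Integrating the tanh lower bound, with `log cosh` as antiderivative of `tanh`, gives
`∫_u^{u₁} r ≥ (log cosh (α(c-u)) - log cosh (α(c-u₁))) / (2α²)`. Since
`x - log 2 ≤ log cosh x ≤ |x|` and `c ≥ u₁`, this is at least `(α(u₁-u) - log 2) / (2α²)`, so the
integrand is at most `2^{C₁/α²} · exp(-(C₁/α)(u₁-u))`, whose integral over `[0, u₁]` is at most
`2^{C₁/α²} · α/C₁` whatever `u₁` is.
-/

open Real Set MeasureTheory

namespace Real

lemma continuous_tanh : Continuous tanh :=
  (continuous_sinh.div continuous_cosh fun x => (cosh_pos x).ne').congr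
    fun x => (tanh_eq_sinh_div_cosh x).symm

lemma hasDerivAt_log_cosh (x : ℝ) : HasDerivAt (fun y => log (cosh y)) (tanh x) x := by
  convert (hasDerivAt_cosh x).log (cosh_pos x).ne' using 1
  rw [tanh_eq_sinh_div_cosh]

lemma integral_tanh (a b : ℝ) : ∫ x in a..b, tanh x = log (cosh b) - log (cosh a) :=
  intervalIntegral.integral_eq_sub_of_hasDerivAt (fun x _ => hasDerivAt_log_cosh x)
    (continuous_tanh.intervalIntegrable a b)

lemma exp_div_two_le_cosh (x : ℝ) : exp x / 2 ≤ cosh x := by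
  rw [cosh_eq]
  linarith [exp_pos (-x)]

lemma cosh_le_exp_abs (x : ℝ) : cosh x ≤ exp |x| := by
  rw [← cosh_abs, cosh_eq]
  linarith [exp_le_exp.mpr (neg_le_self (abs_nonneg x))]

lemma sub_log_two_le_log_cosh (x : ℝ) : x - log 2 ≤ log (cosh x) := by
  calc x - log 2 = log (exp x / 2) := by rw [log_div (exp_pos x).ne' two_ne_zero, log_exp]
    _ ≤ log (cosh x) := log_le_log (by positivity) (exp_div_two_le_cosh x)

lemma log_cosh_le_abs (x : ℝ) : log (cosh x) ≤ |x| :=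
  (log_le_log (cosh_pos x) (cosh_le_exp_abs x)).trans_eq (log_exp |x|)

end Real

lemma integral_tanh_mul_sub {α : ℝ} (hα : α ≠ 0) (c a b : ℝ) :
    ∫ s in a..b, tanh (α * (c - s)) = (log (cosh (α * (c - a))) - log (cosh (α * (c - b)))) / α := by
  simp only [mul_sub, intervalIntegral.integral_comp_sub_mul (fun x => tanh x) hα, integral_tanh,
    smul_eq_mul]
  ring

lemma le_integral_of_tanh_le {α c a b : ℝ} {r : ℝ → ℝ} (hα : 0 < α) (hab : a ≤ b) (hbc : b ≤ c)
    (hr : IntervalIntegrable r volume a b)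
    (hb : ∀ s ∈ Icc a b, (1 / (2 * α)) * tanh (α * (c - s)) ≤ r s) :
    (α * (b - a) - log 2) / (2 * α ^ 2) ≤ ∫ s in a..b, r s := by
  have hcosh : α * (b - a) - log 2 ≤ log (cosh (α * (c - a))) - log (cosh (α * (c - b))) := by
    have h₁ := sub_log_two_le_log_cosh (α * (c - a))
    have h₂ := log_cosh_le_abs (α * (c - b))
    rw [abs_of_nonneg (mul_nonneg hα.le (sub_nonneg.mpr hbc))] at h₂
    linarith
  calc (α * (b - a) - log 2) / (2 * α ^ 2)
      ≤ (log (cosh (α * (c - a))) - log (cosh (α * (c - b)))) / (2 * α ^ 2) := by gcongr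
    _ = ∫ s in a..b, (1 / (2 * α)) * tanh (α * (c - s)) := by
      rw [intervalIntegral.integral_const_mul, integral_tanh_mul_sub hα.ne']
      field_simp
    _ ≤ ∫ s in a..b, r s :=
      intervalIntegral.integral_mono_on hab
        ((continuous_tanh.comp (by fun_prop)).const_mul _ |>.intervalIntegrable a b) hr hb

lemma integral_exp_mul_sub_le {k : ℝ} (hk : 0 < k) (a b : ℝ) :
    ∫ u in a..b, exp (k * u - k * b) ≤ 1 / k := by
  rw [intervalIntegral.integral_comp_mul_sub (fun x => exp x) hk.ne', integral_exp, sub_self,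
    exp_zero, smul_eq_mul, one_div]
  exact mul_le_of_le_one_right (inv_pos.mpr hk).le (by linarith [exp_pos (k * a - k * b)])

/-- Uniform integral bound along characteristics: if the radial
coordinate satisfies the tanh lower bound `r(u) ≥ (1/(2α))tanh(α(c − u))` on `[0,u₁]`,
then `∫₀^{u₁} exp(−2C₁∫_u^{u₁} r) du ≤ 2^{C₁/α²}·(α/C₁)`, independently of `u₁` and `c`. -/
theorem uniform_integral_bound_along_characteristics
    (α C₁ u₁ c : ℝ) (hα : 0 < α) (hC : 0 < C₁) (hu : 0 ≤ u₁) (hc : u₁ ≤ c)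
    (r : ℝ → ℝ) (hr : ContinuousOn r (Icc 0 u₁))
    (hb : ∀ u ∈ Icc (0:ℝ) u₁, (1 / (2 * α)) * Real.tanh (α * (c - u)) ≤ r u) :
    (∫ u in (0:ℝ)..u₁, Real.exp (-2 * C₁ * ∫ s in u..u₁, r s))
      ≤ (2:ℝ) ^ (C₁ / α ^ 2) * (α / C₁) := by
  set K : ℝ := (2:ℝ) ^ (C₁ / α ^ 2) with hK
  have pointwise : ∀ u ∈ Icc (0:ℝ) u₁,
      exp (-2 * C₁ * ∫ s in u..u₁, r s) ≤ K * exp (C₁ / α * u - C₁ / α * u₁) := by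
    rintro u ⟨hu0, huu₁⟩
    have hinner := le_integral_of_tanh_le hα huu₁ hc
      ((hr.mono (Icc_subset_Icc hu0 le_rfl)).intervalIntegrable_of_Icc huu₁)
      (fun s hs => hb s ⟨hu0.trans hs.1, hs.2⟩)
    calc exp (-2 * C₁ * ∫ s in u..u₁, r s)
        ≤ exp (-2 * C₁ * ((α * (u₁ - u) - log 2) / (2 * α ^ 2))) :=
          exp_le_exp.mpr (by nlinarith)
      _ = K * exp (C₁ / α * u - C₁ / α * u₁) := by
          rw [hK, rpow_def_of_pos two_pos, ← exp_add]
          congr 1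
          field_simp
          ring
  calc (∫ u in (0:ℝ)..u₁, exp (-2 * C₁ * ∫ s in u..u₁, r s))
      ≤ ∫ u in (0:ℝ)..u₁, K * exp (C₁ / α * u - C₁ / α * u₁) := by
        rw [intervalIntegral.integral_of_le hu, intervalIntegral.integral_of_le hu]
        exact setIntegral_mono_of_nonneg (fun _ _ => (exp_pos _).le)
          (fun u hu' => pointwise u (Ioc_subset_Icc_self hu'))
          ((by fun_prop : Continuous _).integrableOn_Ioc)
    _ = K * ∫ u in (0:ℝ)..u₁, exp (C₁ / α * u - C₁ / α * u₁) :=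
        intervalIntegral.integral_const_mul _ _
    _ ≤ K * (α / C₁) := by
        gcongr
        simpa using integral_exp_mul_sub_le (div_pos hC hα) 0 u₁
end

section
/- Let a ≥ 1, x ≥ 0, and let g : [0,∞) → ℝ be continuously differentiable with |g'(r)| ≤ x·(a+r)^{−4} for all r ≥ 0. Define ḡ(r) = (1/r)∫₀ʳ g(s) ds for r > 0. Then for every r > 0, |g(r) − ḡ(r)| ≤ x / (a²(a+r)). -/
/-!
The derivative bound says that `|g'|` is dominated by the derivative of `-x / (3 (a + t)³)`,
so `|g r - g s| ≤ x / (3 (a + s)³)` for `0 ≤ s ≤ r`. Averaging over `s ∈ [0, r]` gives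
`|g r - ḡ r| ≤ x (2a + r) / (6 a² (a + r)²)`, and `2a + r ≤ 6 (a + r)`.
-/

open Set MeasureTheory

theorem hasDerivAt_one_div_add_pow {a t : ℝ} (n : ℕ) (ht : a + t ≠ 0) :
    HasDerivAt (fun t => 1 / (a + t) ^ n) (-n / (a + t) ^ (n + 1)) t := by
  have h := ((hasDerivAt_id' t).const_add a).fun_pow n |>.fun_inv (pow_ne_zero n ht)
  simp only [← one_div] at h
  refine h.congr_deriv ?_
  rcases n with _ | n
  · simp
  · rw [Nat.add_sub_cancel]
    field_simp
    ring

theorem intervalIntegrable_one_div_add_pow {a s r : ℝ} (n : ℕ) (hs : 0 < a + s) (hsr : s ≤ r) :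
    IntervalIntegrable (fun t => 1 / (a + t) ^ n) volume s r := by
  refine (continuousOn_const.div (by fun_prop) fun t ht => ?_).intervalIntegrable
  rw [uIcc_of_le hsr] at ht
  exact pow_ne_zero n (by linarith [ht.1])

theorem natCast_mul_integral_one_div_add_pow_succ {a s r : ℝ} (n : ℕ)
    (hs : 0 < a + s) (hsr : s ≤ r) :
    n * ∫ t in s..r, 1 / (a + t) ^ (n + 1) = 1 / (a + s) ^ n - 1 / (a + r) ^ n := by
  rw [← intervalIntegral.integral_const_mul,
    intervalIntegral.integral_eq_sub_of_hasDerivAt (f := fun t => -(1 / (a + t) ^ n))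
      (fun t ht => ?_) ((intervalIntegrable_one_div_add_pow (n + 1) hs hsr).const_mul _)]
  · ring
  rw [uIcc_of_le hsr] at ht
  have hat : a + t ≠ 0 := by linarith [ht.1]
  exact (hasDerivAt_one_div_add_pow n hat).neg.congr_deriv (by ring)

section

variable {E : Type*} [NormedAddCommGroup E] [NormedSpace ℝ E]

theorem norm_sub_le_sub_of_norm_deriv_right_le {f f' : ℝ → E} {φ φ' : ℝ → ℝ} {s r : ℝ}
    (hsr : s ≤ r) (hf : ContinuousOn f (Icc s r))
    (hf' : ∀ t ∈ Ico s r, HasDerivWithinAt f (f' t) (Ici t) t)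
    (hφ : ∀ t ∈ Icc s r, HasDerivAt φ (φ' t) t) (bound : ∀ t ∈ Ico s r, ‖f' t‖ ≤ φ' t) :
    ‖f r - f s‖ ≤ φ r - φ s :=
  image_norm_le_of_norm_deriv_right_le_deriv_boundary' (f := fun t => f t - f s)
    (B := fun t => φ t - φ s) (hf.sub continuousOn_const)
    (fun t ht => (hf' t ht).sub_const (f s)) (by simp)
    (fun t ht => ((hφ t ht).continuousAt.sub continuousAt_const).continuousWithinAt)
    (fun t ht => ((hφ t (Ico_subset_Icc_self ht)).sub_const (φ s)).hasDerivWithinAt) bound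
    ⟨hsr, le_rfl⟩

theorem norm_sub_average_le [CompleteSpace E] {f : ℝ → E} {B : ℝ → ℝ} {c r : ℝ} (hcr : c < r)
    (hf : IntervalIntegrable f volume c r) (hB : IntervalIntegrable B volume c r)
    (h : ∀ s ∈ Ioc c r, ‖f r - f s‖ ≤ B s) :
    ‖f r - (r - c)⁻¹ • ∫ s in c..r, f s‖ ≤ (r - c)⁻¹ * ∫ s in c..r, B s := by
  have hrc : 0 < r - c := sub_pos.2 hcr
  have hmean : f r - (r - c)⁻¹ • ∫ s in c..r, f s = (r - c)⁻¹ • ∫ s in c..r, (f r - f s) := by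
    rw [intervalIntegral.integral_sub intervalIntegrable_const hf,
      intervalIntegral.integral_const, smul_sub, inv_smul_smul₀ hrc.ne']
  rw [hmean, norm_smul, Real.norm_of_nonneg (inv_nonneg.2 hrc.le)]
  gcongr
  exact intervalIntegral.norm_integral_le_of_norm_le hcr.le (Filter.Eventually.of_forall h) hB

end

theorem abs_sub_le_of_abs_deriv_le_div_pow_four {g g' : ℝ → ℝ} {a x s r : ℝ} (ha : 0 < a)
    (hd : ∀ t ∈ Ici (0:ℝ), HasDerivWithinAt g (g' t) (Ici 0) t)
    (hb : ∀ t ∈ Ici (0:ℝ), |g' t| ≤ x / (a + t) ^ 4) (hs : 0 ≤ s) (hsr : s ≤ r) :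
    |g r - g s| ≤ x / 3 * (1 / (a + s) ^ 3 - 1 / (a + r) ^ 3) := by
  have hsub : Icc s r ⊆ Ici 0 := fun t ht => hs.trans ht.1
  have hsub' : Ico s r ⊆ Ici 0 := Ico_subset_Icc_self.trans hsub
  calc |g r - g s| ≤ -(x / 3) * (1 / (a + r) ^ 3) - -(x / 3) * (1 / (a + s) ^ 3) := by
        refine norm_sub_le_sub_of_norm_deriv_right_le (φ := fun t => -(x / 3) * (1 / (a + t) ^ 3))
          hsr (fun t ht => (hd t (hsub ht)).continuousWithinAt.mono hsub)
          (fun t ht => (hd t (hsub' ht)).mono (Ici_subset_Ici.2 (hsub' ht)))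
          (fun t ht => ?_) (fun t ht => hb t (hsub' ht))
        have hat : a + t ≠ 0 := by linarith [mem_Ici.1 (hsub ht)]
        refine ((hasDerivAt_one_div_add_pow 3 hat).const_mul (-(x / 3))).congr_deriv ?_
        push_cast
        ring
    _ = x / 3 * (1 / (a + s) ^ 3 - 1 / (a + r) ^ 3) := by ring

theorem radial_average_decay_estimate_general
    (a x : ℝ) (ha : 1 ≤ a) (hx : 0 ≤ x) (g g' : ℝ → ℝ)
    (hd : ∀ r ∈ Ici (0:ℝ), HasDerivWithinAt g (g' r) (Ici 0) r)
    (hb : ∀ r ∈ Ici (0:ℝ), |g' r| ≤ x / (a + r) ^ 4) :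
    ∀ r > (0:ℝ), |g r - (1 / r) * ∫ s in (0:ℝ)..r, g s| ≤ x / (a ^ 2 * (a + r)) := by
  intro r hr
  have ha0 : 0 < a + 0 := by linarith
  have hpoint : ∀ s ∈ Ioc 0 r, |g r - g s| ≤ x / 3 * (1 / (a + s) ^ 3) := fun s hs => by
    refine (abs_sub_le_of_abs_deriv_le_div_pow_four (by linarith) hd hb hs.1.le hs.2).trans ?_
    have : 0 ≤ 1 / (a + r) ^ 3 := by positivity
    gcongr
    linarith
  have hg : IntervalIntegrable g volume 0 r :=
    (ContinuousOn.mono (fun t ht => (hd t ht).continuousWithinAt)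
      (by rw [uIcc_of_le hr.le]; exact Icc_subset_Ici_self)).intervalIntegrable
  have hB : IntervalIntegrable (fun s => x / 3 * (1 / (a + s) ^ 3)) volume 0 r :=
    (intervalIntegrable_one_div_add_pow 3 ha0 hr.le).const_mul _
  have hint : 2 * ∫ s in (0:ℝ)..r, 1 / (a + s) ^ 3 = 1 / a ^ 2 - 1 / (a + r) ^ 2 := by
    simpa using natCast_mul_integral_one_div_add_pow_succ 2 ha0 hr.le
  calc |g r - (1 / r) * ∫ s in (0:ℝ)..r, g s|
      ≤ r⁻¹ * ∫ s in (0:ℝ)..r, x / 3 * (1 / (a + s) ^ 3) := by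
        simpa using norm_sub_average_le hr hg hB (by simpa using hpoint)
    _ = x / (a ^ 2 * (a + r)) * ((2 * a + r) / (6 * (a + r))) := by
        rw [intervalIntegral.integral_const_mul,
          show ∫ s in (0:ℝ)..r, 1 / (a + s) ^ 3 = (1 / a ^ 2 - 1 / (a + r) ^ 2) / 2 by linarith]
        field_simp
        ring
    _ ≤ x / (a ^ 2 * (a + r)) :=
        mul_le_of_le_one_right (by positivity) ((div_le_one (by positivity)).2 (by linarith))

/-- Christodoulou's fundamental estimate for the radial average:
if `|g'(r)| ≤ x(a+r)^{−4}` on `[0,∞)` with `a ≥ 1`, then for `ḡ(r) = (1/r)∫₀ʳ g`,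
`|g(r) − ḡ(r)| ≤ x/(a²(a+r))` for every `r > 0`. -/
theorem radial_average_decay_estimate
    (a x : ℝ) (ha : 1 ≤ a) (hx : 0 ≤ x) (g g' : ℝ → ℝ)
    (hd : ∀ r ∈ Ici (0:ℝ), HasDerivWithinAt g (g' r) (Ici 0) r)
    (hc : ContinuousOn g' (Ici 0))
    (hb : ∀ r ∈ Ici (0:ℝ), |g' r| ≤ x / (a + r) ^ 4) :
    ∀ r > (0:ℝ), |g r - (1 / r) * ∫ s in (0:ℝ)..r, g s| ≤ x / (a ^ 2 * (a + r)) :=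
  radial_average_decay_estimate_general a x ha hx g g' hd hb
end
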